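/- Let Γ ⊆ ℝ² be a Jordan curve and let C ⊆ ℝ² be the image of a simple curve (a continuous injective map defined on a nondegenerate closed interval), with endpoint set E (the images of the two endpoints of the interval). Then any family of congruent copies of C contained in Γ that are mutually disjoint apart from possibly their endpoints is finite: if G is a set of isometries of ℝ² such that g(C) ⊆ Γ for all g ∈ G and g(C) ∩ h(C) ⊆ g(E) ∪ h(E) whenever g, h ∈ G give distinct copies g(C) ≠ h(C), then the family {g(C) : g ∈ G} is finite. -/

import Mathlib

open Set Metric MeasureTheory
open scoped MeasureTheory

noncomputable section

/-- The Euclidean plane. -/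
abbrev E2 : Type := EuclideanSpace ℝ (Fin 2)

/-- A topological disc: a compact subset of the plane homeomorphic to the closed unit disc. -/
def TopDisc (D : Set E2) : Prop :=
  Nonempty (D ≃ₜ (Metric.closedBall (0 : E2) 1 : Set E2))

/-- A convex disc: a compact convex subset of the plane with nonempty interior. -/
def ConvexDisc (K : Set E2) : Prop :=
  IsCompact K ∧ Convex ℝ K ∧ (interior K).Nonempty

/-- Strict convexity: the boundary contains no line segment. -/
def StrictlyConvexDisc (K : Set E2) : Prop :=
  ConvexDisc K ∧
    ∀ x ∈ frontier K, ∀ y ∈ frontier K, x ≠ y → ¬ segment ℝ x y ⊆ frontier K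

/-- `L` is a supporting line of `K` at the boundary point `x`. -/
def IsSupportLine (K : Set E2) (x : E2) (L : Set E2) : Prop :=
  ∃ f : E2 →L[ℝ] ℝ, f ≠ 0 ∧ L = {y | f y = f x} ∧ ∀ y ∈ K, f y ≤ f x

/-- Smoothness of the boundary: a unique supporting line at every boundary point. -/
def SmoothBoundary (K : Set E2) : Prop :=
  ∀ x ∈ frontier K, ∃! L : Set E2, IsSupportLine K x L

/-- A tiling of `K`: finitely many topological discs covering `K` with pairwise
disjoint interiors. -/
def IsTilingOf (K : Set E2) {n : ℕ} (D : Fin n → Set E2) : Prop :=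
  (∀ i, TopDisc (D i)) ∧ (⋃ i, D i) = K ∧
    ∀ i j, i ≠ j → interior (D i) ∩ interior (D j) = ∅

/-- A tiling is monohedral if the tiles are pairwise congruent. -/
def Monohedral {n : ℕ} (D : Fin n → Set E2) : Prop :=
  ∀ i j, ∃ g : E2 ≃ᵃⁱ[ℝ] E2, g '' D i = D j

/-- A tiling is normal if the intersection of any two tiles is empty or connected. -/
def NormalTiling {n : ℕ} (D : Fin n → Set E2) : Prop :=
  ∀ i j, i ≠ j → (D i ∩ D j = ∅ ∨ IsConnected (D i ∩ D j))

/-- The boundary of `D` admits a closed-curve parametrization that is continuously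
differentiable except at finitely many parameter values. -/
def PiecewiseDiffBoundary (D : Set E2) : Prop :=
  ∃ (γ : ℝ → E2) (T : Finset ℝ),
    ContinuousOn γ (Set.Icc 0 1) ∧ γ 0 = γ 1 ∧
    Set.InjOn γ (Set.Ico 0 1) ∧ γ '' Set.Icc 0 1 = frontier D ∧
    ∀ t ∈ Set.Icc (0:ℝ) 1, t ∉ T → ContDiffAt ℝ 1 γ t

/-- An isometry of the plane is orientation-preserving if its linear part has
determinant `1`. -/
def OrientationPreserving (g : E2 ≃ᵃⁱ[ℝ] E2) : Prop :=
  LinearMap.det (g.linearIsometryEquiv.toLinearEquiv : E2 →ₗ[ℝ] E2) = 1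

/-- A rotation: an orientation-preserving isometry other than the identity that
has a fixed point. -/
def IsRotationIsom (g : E2 ≃ᵃⁱ[ℝ] E2) : Prop :=
  OrientationPreserving g ∧ g ≠ AffineIsometryEquiv.refl ℝ E2 ∧ ∃ x, g x = x

/-- A glide reflection: an orientation-reversing isometry with no fixed point. -/
def IsGlideReflection (g : E2 ≃ᵃⁱ[ℝ] E2) : Prop :=
  ¬ OrientationPreserving g ∧ ∀ x, g x ≠ x

/-- A line reflection: an orientation-reversing isometry whose fixed-point set is
a line. -/
def IsLineReflection (g : E2 ≃ᵃⁱ[ℝ] E2) : Prop :=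
  ¬ OrientationPreserving g ∧
    ∃ p v : E2, v ≠ 0 ∧ {x | g x = x} = {x | ∃ t : ℝ, x = p + t • v}

/-- A translation by a nonzero vector. -/
def IsTranslationIsom (g : E2 ≃ᵃⁱ[ℝ] E2) : Prop :=
  ∃ v : E2, v ≠ 0 ∧ ∀ x, g x = x + v

/-- `K` is centrally symmetric about some point `o`. -/
def CentrallySymmetric (K : Set E2) : Prop :=
  ∃ o : E2, ∀ x ∈ K, (2 : ℝ) • o - x ∈ K

/-- `K` is axially symmetric: some line reflection maps `K` onto itself. -/
def AxiallySymmetric (K : Set E2) : Prop :=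
  ∃ σ : E2 ≃ᵃⁱ[ℝ] E2, IsLineReflection σ ∧ σ '' K = K

/-- `A` is a (nondegenerate) simple arc: the image of a continuous injective map
on `[0,1]`. -/
def IsSimpleArc (A : Set E2) : Prop :=
  ∃ f : ℝ → E2, ContinuousOn f (Set.Icc 0 1) ∧ Set.InjOn f (Set.Icc 0 1) ∧
    f '' Set.Icc 0 1 = A

/-!
Transport `Γ` to the unit circle by a homeomorphism `Φ`. Each copy `g '' C` is connected and its
endpoints lie at the fixed distance `dist (f a) (f b) > 0`, so by uniform continuity of `Φ⁻¹` the
endpoints of its image lie at least some `ε > 0` apart. A connected subset of the circle that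
misses a point `c` becomes, in the angle coordinate cut at `c`, an interval of length at least
`ε`; hence it is a neighbourhood of an `N`-th root of unity as soon as `2π / N < ε`. Two distinct
copies meet in finitely many points and the circle has no isolated points, so they cannot be
neighbourhoods of the same root of unity: the copies inject into a finite set.
-/

open Topology Filter Real

theorem exists_int_mul_mem_Ioo {δ u v : ℝ} (hδ : 0 < δ) (huv : δ < v - u) :
    ∃ j : ℤ, j * δ ∈ Ioo u v := by
  refine ⟨⌊u / δ⌋ + 1, ?_, ?_⟩
  · rw [← div_lt_iff₀ hδ]; push_cast; exact Int.lt_floor_add_one _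
  · have := (le_div_iff₀ hδ).1 (Int.floor_le (u / δ))
    push_cast; linarith

namespace Circle

theorem dist_exp_exp_le (s t : ℝ) : dist (exp s) (exp t) ≤ |s - t| := by
  have hrot : (exp s : ℂ) - exp t = exp t * (Complex.exp (Complex.I * (s - t : ℝ)) - 1) := by
    rw [mul_sub, mul_one, coe_exp, coe_exp, ← Complex.exp_add]
    push_cast
    ring_nf
  change dist (exp s : ℂ) (exp t) ≤ _
  rw [dist_eq_norm, hrot, norm_mul, norm_coe, one_mul, ← Real.norm_eq_abs]
  exact norm_exp_I_mul_ofReal_sub_one_le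

theorem coe_mem_slitPlane {z : Circle} (hz : z ≠ -1) : (z : ℂ) ∈ Complex.slitPlane := by
  refine Complex.mem_slitPlane_iff_arg.2 ⟨fun h => hz ?_, ne_zero_of_mem_unit_sphere z⟩
  rw [← arg_eq_arg, h]
  simp

theorem exists_image_exp_Ioo_subset {K : Set Circle} (hK : IsPreconnected K) {c : Circle}
    (hc : c ∉ K) {x y : Circle} (hx : x ∈ K) (hy : y ∈ K) :
    ∃ u v, dist x y ≤ v - u ∧ exp '' Ioo u v ⊆ K := by
  set s := Complex.arg ↑(-c)
  -- the angle of `z` measured from `-c`, continuous away from `c`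
  set θ : Circle → ℝ := fun z => Complex.arg ↑(z / -c)
  have hθ : ∀ z, exp (θ z + s) = z := fun z => by
    rw [exp_add, exp_arg, exp_arg, div_mul_cancel]
  have hθK : ContinuousOn θ K := fun z hz => by
    have hzc : z / -c ≠ -1 := fun h => hc <| by
      rw [div_eq_iff_eq_mul, neg_one_mul, neg_neg] at h
      exact h ▸ hz
    exact ((Complex.continuousAt_arg (coe_mem_slitPlane hzc)).comp
      (f := fun z : Circle => ((z / -c : Circle) : ℂ)) (by fun_prop)).continuousWithinAt
  have hIcc : uIcc (θ x) (θ y) ⊆ θ '' K :=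
    (hK.image θ hθK).ordConnected.uIcc_subset (mem_image_of_mem θ hx) (mem_image_of_mem θ hy)
  refine ⟨min (θ x) (θ y) + s, max (θ x) (θ y) + s, ?_, ?_⟩
  · calc dist x y = dist (exp (θ x + s)) (exp (θ y + s)) := by rw [hθ, hθ]
      _ ≤ |θ x - θ y| := (dist_exp_exp_le _ _).trans_eq (by rw [add_sub_add_right_eq_sub])
      _ = _ := by rw [add_sub_add_right_eq_sub, max_sub_min_eq_abs']
  · rintro _ ⟨t, ht, rfl⟩
    have hmin : min (θ x) (θ y) ≤ t - s := by linarith [ht.1]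
    have hmax : t - s ≤ max (θ x) (θ y) := by linarith [ht.2]
    obtain ⟨z, hz, hzt⟩ := hIcc ⟨hmin, hmax⟩
    rwa [← sub_add_cancel t s, ← hzt, hθ]

theorem exists_finite_forall_isPreconnected_mem_nhds {ε : ℝ} (hε : 0 < ε) :
    ∃ P : Set Circle, P.Finite ∧ ∀ K : Set Circle, IsPreconnected K →
      ∀ x ∈ K, ∀ y ∈ K, ε ≤ dist x y → ∃ p ∈ P, K ∈ 𝓝 p := by
  obtain ⟨N, hN⟩ := exists_nat_gt (2 * π / ε)
  have hNpos : (0 : ℝ) < N := (div_pos two_pi_pos hε).trans hN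
  set δ := 2 * π / N
  have hδ : 0 < δ := div_pos two_pi_pos hNpos
  have hδε : δ < ε := (div_lt_comm₀ hNpos hε).2 hN
  -- the `N`-th roots of unity
  refine ⟨Subgroup.zpowers (exp δ), ?_, fun K hK x hx y hy hxy => ?_⟩
  · refine IsOfFinOrder.finite_zpowers
      (isOfFinOrder_iff_pow_eq_one.2 ⟨N, by exact_mod_cast hNpos, ?_⟩)
    rw [← exp_nsmul, nsmul_eq_mul, mul_div_cancel₀ _ hNpos.ne', exp_two_pi]
  by_cases hKu : K = univ
  · exact ⟨1, one_mem _, hKu ▸ univ_mem⟩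
  obtain ⟨c, hc⟩ := (ne_univ_iff_exists_notMem K).1 hKu
  obtain ⟨u, v, huv, hsub⟩ := exists_image_exp_Ioo_subset hK hc hx hy
  obtain ⟨j, hj⟩ := exists_int_mul_mem_Ioo hδ (hδε.trans_le (hxy.trans huv))
  refine ⟨exp (j * δ), ?_, mem_of_superset
    ((isLocalHomeomorph_circleExp.isOpenMap _ isOpen_Ioo).mem_nhds (mem_image_of_mem _ hj)) hsub⟩
  rw [← zsmul_eq_mul, exp_zsmul]
  exact Subgroup.zpow_mem_zpowers _ _

end Circle

def sphereHomeomorphCircle : sphere (0 : E2) 1 ≃ₜ Circle :=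
  Complex.orthonormalBasisOneI.repr.symm.toHomeomorph.subtype fun x => by
    change x ∈ Metric.sphere 0 1 ↔ _ ∈ Metric.sphere (0 : ℂ) 1
    simp only [mem_sphere_zero_iff_norm, LinearIsometryEquiv.coe_toHomeomorph,
      LinearIsometryEquiv.norm_map]

theorem Set.Finite.of_pairwise_finite_inter_of_mem_nhds {X : Type*} [TopologicalSpace X]
    [T1Space X] [∀ x : X, (𝓝[≠] x).NeBot] {P : Set X} (hP : P.Finite) {𝒜 : Set (Set X)}
    (h𝒜 : ∀ A ∈ 𝒜, ∃ p ∈ P, A ∈ 𝓝 p) (hinter : 𝒜.Pairwise fun A B => (A ∩ B).Finite) :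
    𝒜.Finite := by
  choose p hpP hp using h𝒜
  have := hP.to_subtype
  refine Set.finite_coe_iff.1 <|
    Finite.of_injective (fun A : 𝒜 => (⟨p A A.2, hpP A A.2⟩ : P)) fun A B hAB => ?_
  by_contra hne
  have hpAB : p A A.2 = p B B.2 := congrArg Subtype.val hAB
  exact infinite_of_mem_nhds _ (inter_mem (hp A A.2) (hpAB ▸ hp B B.2))
    (hinter A.2 B.2 (Subtype.coe_injective.ne hne))

theorem exists_finite_forall_isPreconnected_mem_nhds_of_homeomorph_circle {X : Type*}
    [PseudoMetricSpace X] (Φ : X ≃ₜ Circle) {d : ℝ} (hd : 0 < d) :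
    ∃ P : Set X, P.Finite ∧ ∀ K : Set X, IsPreconnected K →
      ∀ x ∈ K, ∀ y ∈ K, d ≤ dist x y → ∃ p ∈ P, K ∈ 𝓝 p := by
  obtain ⟨ε, hε, hΦε⟩ := Metric.uniformContinuous_iff.1
    (CompactSpace.uniformContinuous_of_continuous Φ.symm.continuous) d hd
  obtain ⟨P, hP, hPK⟩ := Circle.exists_finite_forall_isPreconnected_mem_nhds hε
  refine ⟨Φ.symm '' P, hP.image _, fun K hK x hx y hy hxy => ?_⟩
  have hfar : ε ≤ dist (Φ x) (Φ y) := not_lt.1 fun h => hxy.not_gt (by simpa using hΦε h)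
  obtain ⟨p, hp, hKp⟩ := hPK (Φ '' K) (hK.image _ Φ.continuous.continuousOn) _
    (mem_image_of_mem _ hx) _ (mem_image_of_mem _ hy) hfar
  refine ⟨Φ.symm p, mem_image_of_mem _ hp, ?_⟩
  rw [← Φ.preimage_image K]
  exact Φ.continuous.continuousAt.preimage_mem_nhds (by rwa [Φ.apply_symm_apply])

theorem Set.Finite.of_homeomorph_circle {X : Type*} [MetricSpace X] (Φ : X ≃ₜ Circle) {d : ℝ}
    (hd : 0 < d) {𝒜 : Set (Set X)} (hconn : ∀ A ∈ 𝒜, IsPreconnected A)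
    (hfar : ∀ A ∈ 𝒜, ∃ x ∈ A, ∃ y ∈ A, d ≤ dist x y)
    (hinter : 𝒜.Pairwise fun A B => (A ∩ B).Finite) : 𝒜.Finite := by
  have : ConnectedSpace X := Φ.symm.surjective.connectedSpace Φ.symm.continuous
  have : Nontrivial X := ⟨Φ.symm 1, Φ.symm (-1), by simpa using (Circle.neg_ne_self 1).symm⟩
  obtain ⟨P, hP, hPK⟩ := exists_finite_forall_isPreconnected_mem_nhds_of_homeomorph_circle Φ hd
  refine hP.of_pairwise_finite_inter_of_mem_nhds (fun A hA => ?_) hinter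
  obtain ⟨x, hx, y, hy, hxy⟩ := hfar A hA
  exact hPK A (hconn A hA) x hx y hy hxy

theorem Set.Finite.of_subset_homeomorph_circle {Y : Type*} [MetricSpace Y] {Γ : Set Y}
    (Φ : Γ ≃ₜ Circle) {d : ℝ} (hd : 0 < d) {𝒜 : Set (Set Y)} (hsub : ∀ A ∈ 𝒜, A ⊆ Γ)
    (hconn : ∀ A ∈ 𝒜, IsPreconnected A) (hfar : ∀ A ∈ 𝒜, ∃ x ∈ A, ∃ y ∈ A, d ≤ dist x y)
    (hinter : 𝒜.Pairwise fun A B => (A ∩ B).Finite) : 𝒜.Finite := by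
  have himage : ∀ A ∈ 𝒜, ((↑) : Γ → Y) '' ((↑) ⁻¹' A) = A := fun A hA =>
    image_preimage_eq_of_subset (by rw [Subtype.range_coe]; exact hsub A hA)
  refine Set.Finite.of_finite_image (f := fun A => ((↑) ⁻¹' A : Set Γ)) ?_
    fun A hA B hB h => by rw [← himage A hA, ← himage B hB]; exact congrArg _ h
  refine Set.Finite.of_homeomorph_circle Φ hd ?_ ?_ ?_
  · rintro _ ⟨A, hA, rfl⟩
    rw [← IsInducing.subtypeVal.isPreconnected_image, himage A hA]
    exact hconn A hA
  · rintro _ ⟨A, hA, rfl⟩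
    obtain ⟨x, hx, y, hy, hxy⟩ := hfar A hA
    exact ⟨⟨x, hsub A hA hx⟩, hx, ⟨y, hsub A hA hy⟩, hy, hxy⟩
  · rintro _ ⟨A, hA, rfl⟩ _ ⟨B, hB, rfl⟩ hne
    rw [← preimage_inter]
    exact (hinter hA hB fun h => hne (h ▸ rfl)).preimage Subtype.val_injective.injOn

/-- A Jordan curve contains only finitely many congruent copies of a
simple curve `C` that are mutually disjoint apart from possibly their endpoints. -/
theorem stmt8 (Γ : Set E2)
    (hΓ : Nonempty (Γ ≃ₜ (Metric.sphere (0 : E2) 1 : Set E2)))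
    (a b : ℝ) (hab : a < b) (f : ℝ → E2)
    (hf : ContinuousOn f (Set.Icc a b)) (hinj : Set.InjOn f (Set.Icc a b))
    (C E : Set E2) (hC : C = f '' Set.Icc a b) (hE : E = {f a, f b})
    (G : Set (E2 ≃ᵃⁱ[ℝ] E2))
    (hsub : ∀ g ∈ G, g '' C ⊆ Γ)
    (hdisj : ∀ g ∈ G, ∀ h ∈ G, g '' C ≠ h '' C →
      g '' C ∩ h '' C ⊆ g '' E ∪ h '' E) :
    Set.Finite ((fun g : E2 ≃ᵃⁱ[ℝ] E2 => g '' C) '' G) := by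
  obtain ⟨e⟩ := hΓ
  have haC : f a ∈ C := hC ▸ mem_image_of_mem f (left_mem_Icc.2 hab.le)
  have hbC : f b ∈ C := hC ▸ mem_image_of_mem f (right_mem_Icc.2 hab.le)
  have hd : 0 < dist (f a) (f b) :=
    dist_pos.2 (hinj.ne (left_mem_Icc.2 hab.le) (right_mem_Icc.2 hab.le) hab.ne)
  have hEfin : E.Finite := hE ▸ toFinite _
  refine Set.Finite.of_subset_homeomorph_circle (e.trans sphereHomeomorphCircle) hd ?_ ?_ ?_ ?_
  · rintro _ ⟨g, hg, rfl⟩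
    exact hsub g hg
  · rintro _ ⟨g, -, rfl⟩
    exact hC ▸ (isPreconnected_Icc.image f hf).image g g.continuous.continuousOn
  · rintro _ ⟨g, -, rfl⟩
    exact ⟨g (f a), mem_image_of_mem g haC, g (f b), mem_image_of_mem g hbC, (g.dist_map _ _).ge⟩
  · rintro _ ⟨g, hg, rfl⟩ _ ⟨h, hh, rfl⟩ hne
    exact ((hEfin.image g).union (hEfin.image h)).subset (hdisj g hg h hh hne)
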